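/- Under the single change-point model with k_n*/n → τ ∈ (0,1) and Δ = 2μ12 − μ11 − μ22, for every γ ∈ (0,1), E[S_{n,⌊nγ⌋}]/n → Δ·G(γ,τ) as n → ∞, where G(γ,τ) = (1−τ)²·γ/(1−γ) for γ ≤ τ and G(γ,τ) = τ²·(1−γ)/γ for γ ≥ τ. -/

import Mathlib

open MeasureTheory ProbabilityTheory Filter Finset Topology

/-- Between-sample average `U_XY` (observations indexed `0,…,n−1`, split after the
first `k`). -/
noncomputable def UXY {Ω : Type*} {p : ℕ} (X : ℕ → Ω → EuclideanSpace ℝ (Fin p))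
    (n k : ℕ) (ω : Ω) : ℝ :=
  (1 / ((k : ℝ) * ((n : ℝ) - (k : ℝ)))) *
    ∑ i ∈ range k, ∑ j ∈ Ico k n, ‖X i ω - X j ω‖

/-- Within-first-sample average `U_XX`. -/
noncomputable def UXX {Ω : Type*} {p : ℕ} (X : ℕ → Ω → EuclideanSpace ℝ (Fin p))
    (k : ℕ) (ω : Ω) : ℝ :=
  (2 / ((k : ℝ) * ((k : ℝ) - 1))) * ∑ l ∈ range k, ∑ i ∈ range l, ‖X i ω - X l ω‖

/-- Within-second-sample average `U_YY`. -/
noncomputable def UYY {Ω : Type*} {p : ℕ} (X : ℕ → Ω → EuclideanSpace ℝ (Fin p))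
    (n k : ℕ) (ω : Ω) : ℝ :=
  (2 / (((n : ℝ) - (k : ℝ)) * (((n : ℝ) - (k : ℝ)) - 1))) *
    ∑ l ∈ Ico k n, ∑ j ∈ Ico k l, ‖X j ω - X l ω‖

/-- Sample energy distance `E_k = 2U_XY − U_XX − U_YY`. -/
noncomputable def Ek {Ω : Type*} {p : ℕ} (X : ℕ → Ω → EuclideanSpace ℝ (Fin p))
    (n k : ℕ) (ω : Ω) : ℝ :=
  2 * UXY X n k ω - UXX X k ω - UYY X n k ω

/-- Scaled statistic `S_{n,k} = (k(n−k)/n)·E_k`. -/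
noncomputable def S {Ω : Type*} {p : ℕ} (X : ℕ → Ω → EuclideanSpace ℝ (Fin p))
    (n k : ℕ) (ω : Ω) : ℝ :=
  ((k : ℝ) * ((n : ℝ) - (k : ℝ)) / (n : ℝ)) * Ek X n k ω

/-- Population energy contrast `Δ = 2μ₁₂ − μ₁₁ − μ₂₂`. -/
noncomputable def Delta {p : ℕ} (F₁ F₂ : Measure (EuclideanSpace ℝ (Fin p))) : ℝ :=
  2 * ∫ x, ∫ y, ‖x - y‖ ∂F₂ ∂F₁
    - ∫ x, ∫ y, ‖x - y‖ ∂F₁ ∂F₁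
    - ∫ x, ∫ y, ‖x - y‖ ∂F₂ ∂F₂

/-- The signal-profile function `G(γ,τ)`. -/
noncomputable def G (γ τ : ℝ) : ℝ :=
  if γ ≤ τ then (1 - τ) ^ 2 * γ / (1 - γ) else τ ^ 2 * (1 - γ) / γ

section helpers

variable {p : ℕ}


noncomputable def I2 (μ ν : Measure (EuclideanSpace ℝ (Fin p))) : ℝ :=
  ∫ x, ∫ y, ‖x - y‖ ∂ν ∂μ

lemma integrable_norm_of_sq {μ : Measure (EuclideanSpace ℝ (Fin p))} [IsProbabilityMeasure μ]
    (h : Integrable (fun x => ‖x‖ ^ 2) μ) : Integrable (fun x => ‖x‖) μ := by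
  refine ((integrable_const (1:ℝ)).add h).mono'
    continuous_norm.measurable.aestronglyMeasurable ?_
  filter_upwards with x
  have h0 : (0:ℝ) ≤ ‖x‖ := norm_nonneg x
  simp only [Pi.add_apply]
  rw [Real.norm_eq_abs, abs_of_nonneg h0]
  nlinarith

lemma integrable_prod_norm_sub (μ ν : Measure (EuclideanSpace ℝ (Fin p)))
    [IsProbabilityMeasure μ] [IsProbabilityMeasure ν]
    (h1 : Integrable (fun x => ‖x‖) μ) (h2 : Integrable (fun x => ‖x‖) ν) :
    Integrable (fun z : EuclideanSpace ℝ (Fin p) × EuclideanSpace ℝ (Fin p) => ‖z.1 - z.2‖)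
      (μ.prod ν) := by
  have hf : Integrable (fun z : EuclideanSpace ℝ (Fin p) × EuclideanSpace ℝ (Fin p) => ‖z.1‖)
      (μ.prod ν) := by
    have : Integrable (fun x => ‖x‖) (Measure.map Prod.fst (μ.prod ν)) := by
      rw [Measure.map_fst_prod]; simpa [measure_univ] using h1
    exact (integrable_map_measure continuous_norm.measurable.aestronglyMeasurable
      measurable_fst.aemeasurable).mp this
  have hg : Integrable (fun z : EuclideanSpace ℝ (Fin p) × EuclideanSpace ℝ (Fin p) => ‖z.2‖)
      (μ.prod ν) := by
    have : Integrable (fun x => ‖x‖) (Measure.map Prod.snd (μ.prod ν)) := by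
      rw [Measure.map_snd_prod]; simpa [measure_univ] using h2
    exact (integrable_map_measure continuous_norm.measurable.aestronglyMeasurable
      measurable_snd.aemeasurable).mp this
  refine (hf.add hg).mono'
    ((continuous_fst.sub continuous_snd).norm).measurable.aestronglyMeasurable ?_
  filter_upwards with z
  rw [Real.norm_eq_abs, abs_of_nonneg (norm_nonneg _)]
  exact norm_sub_le _ _

lemma pair_integral {Ω : Type*} [MeasurableSpace Ω] {P : Measure Ω} [IsProbabilityMeasure P]
    {X Y : Ω → EuclideanSpace ℝ (Fin p)} (hX : Measurable X) (hY : Measurable Y)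
    (hind : IndepFun X Y P)
    (h1 : Integrable (fun x => ‖x‖) (P.map X)) (h2 : Integrable (fun x => ‖x‖) (P.map Y)) :
    (∫ ω, ‖X ω - Y ω‖ ∂P) = I2 (P.map X) (P.map Y) ∧
      Integrable (fun ω => ‖X ω - Y ω‖) P := by
  have hPX : IsProbabilityMeasure (P.map X) := Measure.isProbabilityMeasure_map hX.aemeasurable
  have hPY : IsProbabilityMeasure (P.map Y) := Measure.isProbabilityMeasure_map hY.aemeasurable
  have hmap : P.map (fun ω => (X ω, Y ω)) = (P.map X).prod (P.map Y) :=
    (indepFun_iff_map_prod_eq_prod_map_map hX.aemeasurable hY.aemeasurable).mp hind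
  have hfm : AEStronglyMeasurable
      (fun z : EuclideanSpace ℝ (Fin p) × EuclideanSpace ℝ (Fin p) => ‖z.1 - z.2‖)
      (P.map (fun ω => (X ω, Y ω))) :=
    ((continuous_fst.sub continuous_snd).norm).measurable.aestronglyMeasurable
  have hintprod := integrable_prod_norm_sub (P.map X) (P.map Y) h1 h2
  have hint : Integrable (fun ω => ‖X ω - Y ω‖) P := by
    have := (integrable_map_measure hfm (hX.prodMk hY).aemeasurable).mp
      (by rw [hmap]; exact hintprod)
    simpa [Function.comp_def] using this
  constructor
  · have h1' : (∫ ω, ‖X ω - Y ω‖ ∂P)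
        = ∫ z : EuclideanSpace ℝ (Fin p) × EuclideanSpace ℝ (Fin p), ‖z.1 - z.2‖
            ∂(P.map (fun ω => (X ω, Y ω))) := by
      rw [integral_map (hX.prodMk hY).aemeasurable hfm]
    rw [h1', hmap, integral_prod _ hintprod]; rfl
  · exact hint

lemma gaussR (n : ℕ) : ∑ i ∈ range n, (i : ℝ) = n * (n - 1) / 2 := by
  induction n with
  | zero => simp
  | succ n ih => rw [Finset.sum_range_succ, ih]; push_cast; ring

lemma gaussIco (a b : ℕ) (h : a ≤ b) :
    ∑ l ∈ Ico a b, ((l : ℝ) - a) = ((b : ℝ) - a) * ((b : ℝ) - a - 1) / 2 := by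
  rw [Finset.sum_Ico_eq_sum_range]
  have : ∀ i ∈ range (b - a), ((a + i : ℕ) : ℝ) - a = (i : ℝ) := by
    intro i _; push_cast; ring
  rw [Finset.sum_congr rfl this, gaussR]
  have : ((b - a : ℕ) : ℝ) = (b : ℝ) - a := by
    push_cast [h]; ring
  rw [this]

noncomputable def Aform (a b c x t e : ℝ) : ℝ :=
  x * (1 - x) * (2 * ((t - x) * a + (1 - t) * b) / (1 - x) - a -
    ((t - x) * (t - x - e) * a + 2 * (t - x) * (1 - t) * b + (1 - t) * (1 - t - e) * c) /
      ((1 - x) * (1 - x - e)))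

noncomputable def Bform (a b c x t e : ℝ) : ℝ :=
  x * (1 - x) * (2 * (t * b + (x - t) * c) / x -
    (t * (t - e) * a + 2 * t * (x - t) * b + (x - t) * (x - t - e) * c) / (x * (x - e)) - c)

lemma Aexpr_eq (a b c K M N : ℝ) (hK : K ≠ 0) (hK1 : K - 1 ≠ 0) (hNK : N - K ≠ 0)
    (hNK1 : N - K - 1 ≠ 0) (hN : N ≠ 0) :
    ((K * (N - K) / N) *
      (2 * ((1 / (K * (N - K))) * (K * ((M - K) * a + (N - M) * b)))
        - (2 / (K * (K - 1))) * (K * (K - 1) / 2 * a)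
        - (2 / ((N - K) * (N - K - 1))) *
            ((M - K) * (M - K - 1) / 2 * a + (N - M) * (M - K) * b
              + (N - M) * (N - M - 1) / 2 * c))) / N
      = Aform a b c (K / N) (M / N) (1 / N) := by
  have r1 : 1 - K / N = (N - K) / N := by field_simp
  have r3 : 1 - K / N - 1 / N = (N - K - 1) / N := by first
    | (field_simp; ring)
    | field_simp
  have r4 : M / N - K / N = (M - K) / N := by field_simp
  have r5 : M / N - K / N - 1 / N = (M - K - 1) / N := by first
    | (field_simp; ring)
    | field_simp
  have r2 : 1 - M / N = (N - M) / N := by field_simp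
  have r6 : 1 - M / N - 1 / N = (N - M - 1) / N := by first
    | (field_simp; ring)
    | field_simp
  rw [Aform, r3, r1, r5, r4, r6, r2]
  field_simp

lemma Bexpr_eq (a b c K M N : ℝ) (hK : K ≠ 0) (hK1 : K - 1 ≠ 0) (hNK : N - K ≠ 0)
    (hNK1 : N - K - 1 ≠ 0) (hN : N ≠ 0) :
    ((K * (N - K) / N) *
      (2 * ((1 / (K * (N - K))) * ((N - K) * (M * b + (K - M) * c)))
        - (2 / (K * (K - 1))) *
            (M * (M - 1) / 2 * a + (K - M) * M * b + (K - M) * (K - M - 1) / 2 * c)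
        - (2 / ((N - K) * (N - K - 1))) * ((N - K) * (N - K - 1) / 2 * c))) / N
      = Bform a b c (K / N) (M / N) (1 / N) := by
  have r1 : K / N - M / N = (K - M) / N := by field_simp
  have r2 : K / N - M / N - 1 / N = (K - M - 1) / N := by first
    | (field_simp; ring)
    | field_simp
  have r3 : M / N - 1 / N = (M - 1) / N := by field_simp
  have r4 : 1 - K / N = (N - K) / N := by field_simp
  have r5 : K / N - 1 / N = (K - 1) / N := by field_simp
  rw [Bform, r2, r1, r3, r5, r4]
  field_simp

lemma Aform_limit (a b c γ τ : ℝ) (h1 : 1 - γ ≠ 0) :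
    Aform a b c γ τ 0 = (2 * b - a - c) * ((1 - τ) ^ 2 * γ / (1 - γ)) := by
  rw [Aform]
  field_simp
  ring

lemma Bform_limit (a b c γ τ : ℝ) (h1 : γ ≠ 0) :
    Bform a b c γ τ 0 = (2 * b - a - c) * (τ ^ 2 * (1 - γ) / γ) := by
  rw [Bform]
  field_simp
  ring

lemma Aform_tendsto (a b c : ℝ) {γ τ : ℝ} (hγ1 : (1 : ℝ) - γ ≠ 0) {x t e : ℕ → ℝ}
    (hx : Tendsto x atTop (𝓝 γ)) (ht : Tendsto t atTop (𝓝 τ))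
    (he : Tendsto e atTop (𝓝 0)) :
    Tendsto (fun n => Aform a b c (x n) (t n) (e n)) atTop (𝓝 (Aform a b c γ τ 0)) := by
  unfold Aform
  have h1x : Tendsto (fun n => 1 - x n) atTop (𝓝 (1 - γ)) := tendsto_const_nhds.sub hx
  have h1xe : Tendsto (fun n => 1 - x n - e n) atTop (𝓝 (1 - γ - 0)) := h1x.sub he
  have h1t : Tendsto (fun n => 1 - t n) atTop (𝓝 (1 - τ)) := tendsto_const_nhds.sub ht
  have h1te : Tendsto (fun n => 1 - t n - e n) atTop (𝓝 (1 - τ - 0)) := h1t.sub he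
  have htx : Tendsto (fun n => t n - x n) atTop (𝓝 (τ - γ)) := ht.sub hx
  have htxe : Tendsto (fun n => t n - x n - e n) atTop (𝓝 (τ - γ - 0)) := htx.sub he
  have hnum1 : Tendsto (fun n => 2 * ((t n - x n) * a + (1 - t n) * b)) atTop
      (𝓝 (2 * ((τ - γ) * a + (1 - τ) * b))) :=
    ((htx.mul_const a).add (h1t.mul_const b)).const_mul 2
  have hnum2 : Tendsto (fun n => (t n - x n) * (t n - x n - e n) * a
      + 2 * (t n - x n) * (1 - t n) * b + (1 - t n) * (1 - t n - e n) * c) atTop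
      (𝓝 ((τ - γ) * (τ - γ - 0) * a + 2 * (τ - γ) * (1 - τ) * b
        + (1 - τ) * (1 - τ - 0) * c)) :=
    (((htx.mul htxe).mul_const a).add (((htx.const_mul 2).mul h1t).mul_const b)).add
      ((h1t.mul h1te).mul_const c)
  have hden2 : Tendsto (fun n => (1 - x n) * (1 - x n - e n)) atTop
      (𝓝 ((1 - γ) * (1 - γ - 0))) := h1x.mul h1xe
  have hden2ne : (1 - γ) * (1 - γ - 0) ≠ 0 := by
    rw [sub_zero]; exact mul_ne_zero hγ1 hγ1
  exact (hx.mul h1x).mul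
    (((hnum1.div h1x hγ1).sub tendsto_const_nhds).sub (hnum2.div hden2 hden2ne))

lemma Bform_tendsto (a b c : ℝ) {γ τ : ℝ} (hγ0 : γ ≠ 0) {x t e : ℕ → ℝ}
    (hx : Tendsto x atTop (𝓝 γ)) (ht : Tendsto t atTop (𝓝 τ))
    (he : Tendsto e atTop (𝓝 0)) :
    Tendsto (fun n => Bform a b c (x n) (t n) (e n)) atTop (𝓝 (Bform a b c γ τ 0)) := by
  unfold Bform
  have h1x : Tendsto (fun n => 1 - x n) atTop (𝓝 (1 - γ)) := tendsto_const_nhds.sub hx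
  have hxe : Tendsto (fun n => x n - e n) atTop (𝓝 (γ - 0)) := hx.sub he
  have hte : Tendsto (fun n => t n - e n) atTop (𝓝 (τ - 0)) := ht.sub he
  have hxt : Tendsto (fun n => x n - t n) atTop (𝓝 (γ - τ)) := hx.sub ht
  have hxte : Tendsto (fun n => x n - t n - e n) atTop (𝓝 (γ - τ - 0)) := hxt.sub he
  have hnum1 : Tendsto (fun n => 2 * (t n * b + (x n - t n) * c)) atTop
      (𝓝 (2 * (τ * b + (γ - τ) * c))) :=
    ((ht.mul_const b).add (hxt.mul_const c)).const_mul 2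
  have hnum2 : Tendsto (fun n => t n * (t n - e n) * a + 2 * t n * (x n - t n) * b
      + (x n - t n) * (x n - t n - e n) * c) atTop
      (𝓝 (τ * (τ - 0) * a + 2 * τ * (γ - τ) * b + (γ - τ) * (γ - τ - 0) * c)) :=
    (((ht.mul hte).mul_const a).add (((ht.const_mul 2).mul hxt).mul_const b)).add
      ((hxt.mul hxte).mul_const c)
  have hden2 : Tendsto (fun n => x n * (x n - e n)) atTop (𝓝 (γ * (γ - 0))) := hx.mul hxe
  have hden2ne : γ * (γ - 0) ≠ 0 := by rw [sub_zero]; exact mul_ne_zero hγ0 hγ0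
  exact (hx.mul h1x).mul
    (((hnum1.div hx hγ0).sub (hnum2.div hden2 hden2ne)).sub tendsto_const_nhds)

section core
variable {Ω : Type*} [MeasurableSpace Ω] {P : Measure Ω} [IsProbabilityMeasure P] {p : ℕ}
  {F₁ F₂ : Measure (EuclideanSpace ℝ (Fin p))}
  [IsProbabilityMeasure F₁] [IsProbabilityMeasure F₂]
  {X : ℕ → Ω → EuclideanSpace ℝ (Fin p)} {m : ℕ}

lemma integral_S_div_A
    (h1 : Integrable (fun x => ‖x‖) F₁) (h2 : Integrable (fun x => ‖x‖) F₂)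
    (hXm : ∀ i, Measurable (X i)) (hind : iIndepFun X P)
    (hlaw1 : ∀ i, i < m → P.map (X i) = F₁) (hlaw2 : ∀ i, m ≤ i → P.map (X i) = F₂)
    (n k : ℕ) (hk2 : 2 ≤ k) (hkm : k ≤ m) (hmn : m ≤ n) (hkn : k + 2 ≤ n) :
    (∫ ω, S X n k ω ∂P) / n
      = Aform (I2 F₁ F₁) (I2 F₁ F₂) (I2 F₂ F₂) ((k : ℝ) / n) ((m : ℝ) / n) (1 / (n : ℝ)) := by
  set a := I2 F₁ F₁ with ha
  set b := I2 F₁ F₂ with hb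
  set c := I2 F₂ F₂ with hc
  set K := (k : ℝ) with hK
  set M := (m : ℝ) with hM
  set N := (n : ℝ) with hN
  have hlawi : ∀ i, P.map (X i) = if i < m then F₁ else F₂ := by
    intro i
    by_cases h : i < m
    · simp [h, hlaw1 i h]
    · simp [h, hlaw2 i (le_of_not_gt h)]
  have hIntlaw : ∀ i, Integrable (fun x => ‖x‖) (P.map (X i)) := by
    intro i; rw [hlawi i]; split_ifs; exacts [h1, h2]
  have hpair : ∀ i j : ℕ, i ≠ j →
      ((∫ ω, ‖X i ω - X j ω‖ ∂P)
          = I2 (if i < m then F₁ else F₂) (if j < m then F₁ else F₂)) ∧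
        Integrable (fun ω => ‖X i ω - X j ω‖) P := by
    intro i j hij
    have := pair_integral (hXm i) (hXm j) (hind.indepFun hij) (hIntlaw i) (hIntlaw j)
    rwa [hlawi i, hlawi j] at this
  have hint : ∀ i j : ℕ, i ≠ j → Integrable (fun ω => ‖X i ω - X j ω‖) P :=
    fun i j h => (hpair i j h).2
  have cmk : ((m - k : ℕ) : ℝ) = M - K := by push_cast [hkm]; ring
  have cnm : ((n - m : ℕ) : ℝ) = N - M := by push_cast [hmn]; ring
  -- UXY
  have hXY : ∫ ω, UXY X n k ω ∂P
      = (1 / (K * (N - K))) * (K * ((M - K) * a + (N - M) * b)) := by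
    unfold UXY
    rw [integral_const_mul]
    congr 1
    rw [integral_finset_sum _ (fun i hi => integrable_finset_sum _ fun j hj =>
      hint i j (by simp only [mem_range] at hi; simp only [mem_Ico] at hj; omega))]
    have step : ∀ i ∈ range k, (∫ ω, ∑ j ∈ Ico k n, ‖X i ω - X j ω‖ ∂P)
        = (M - K) * a + (N - M) * b := by
      intro i hi
      have hik : i < k := mem_range.mp hi
      have hi' : i < m := lt_of_lt_of_le hik hkm
      rw [integral_finset_sum _ (fun j hj =>
        hint i j (by simp only [mem_Ico] at hj; omega))]
      rw [← Finset.sum_Ico_consecutive _ hkm hmn]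
      have e1 : ∑ j ∈ Ico k m, (∫ ω, ‖X i ω - X j ω‖ ∂P) = (M - K) * a := by
        have hc : ∀ j ∈ Ico k m, (∫ ω, ‖X i ω - X j ω‖ ∂P) = a := by
          intro j hj
          have hj' := mem_Ico.mp hj
          rw [(hpair i j (by omega)).1, if_pos hi', if_pos hj'.2]
        rw [Finset.sum_congr rfl hc, Finset.sum_const, Nat.card_Ico, nsmul_eq_mul, cmk]
      have e2 : ∑ j ∈ Ico m n, (∫ ω, ‖X i ω - X j ω‖ ∂P) = (N - M) * b := by
        have hc : ∀ j ∈ Ico m n, (∫ ω, ‖X i ω - X j ω‖ ∂P) = b := by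
          intro j hj
          have hj' := mem_Ico.mp hj
          rw [(hpair i j (by omega)).1, if_pos hi', if_neg (not_lt.mpr hj'.1)]
        rw [Finset.sum_congr rfl hc, Finset.sum_const, Nat.card_Ico, nsmul_eq_mul, cnm]
      rw [e1, e2]
    rw [Finset.sum_congr rfl step, Finset.sum_const, card_range, nsmul_eq_mul]
  -- UXX
  have hXX : ∫ ω, UXX X k ω ∂P = (2 / (K * (K - 1))) * (K * (K - 1) / 2 * a) := by
    unfold UXX
    rw [integral_const_mul]
    congr 1
    rw [integral_finset_sum _ (fun l hl => integrable_finset_sum _ fun i hi =>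
      hint i l (by simp only [mem_range] at hl hi; omega))]
    have step : ∀ l ∈ range k, (∫ ω, ∑ i ∈ range l, ‖X i ω - X l ω‖ ∂P) = (l : ℝ) * a := by
      intro l hl
      have hlk : l < k := mem_range.mp hl
      rw [integral_finset_sum _ (fun i hi =>
        hint i l (by simp only [mem_range] at hi; omega))]
      have hc : ∀ i ∈ range l, (∫ ω, ‖X i ω - X l ω‖ ∂P) = a := by
        intro i hi
        have hil : i < l := mem_range.mp hi
        rw [(hpair i l (by omega)).1, if_pos (by omega), if_pos (by omega)]
      rw [Finset.sum_congr rfl hc, Finset.sum_const, card_range, nsmul_eq_mul]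
    rw [Finset.sum_congr rfl step, ← Finset.sum_mul, gaussR]
  -- UYY
  have hYY : ∫ ω, UYY X n k ω ∂P = (2 / ((N - K) * (N - K - 1))) *
      ((M - K) * (M - K - 1) / 2 * a + (N - M) * (M - K) * b
        + (N - M) * (N - M - 1) / 2 * c) := by
    unfold UYY
    rw [integral_const_mul]
    congr 1
    rw [integral_finset_sum _ (fun l hl => integrable_finset_sum _ fun j hj =>
      hint j l (by simp only [mem_Ico] at hl hj; omega))]
    rw [← Finset.sum_Ico_consecutive _ hkm hmn]
    have p1 : ∑ l ∈ Ico k m, (∫ ω, ∑ j ∈ Ico k l, ‖X j ω - X l ω‖ ∂P)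
        = (M - K) * (M - K - 1) / 2 * a := by
      have step : ∀ l ∈ Ico k m, (∫ ω, ∑ j ∈ Ico k l, ‖X j ω - X l ω‖ ∂P)
          = ((l : ℝ) - K) * a := by
        intro l hl
        have hl' := mem_Ico.mp hl
        rw [integral_finset_sum _ (fun j hj =>
          hint j l (by simp only [mem_Ico] at hj; omega))]
        have hc : ∀ j ∈ Ico k l, (∫ ω, ‖X j ω - X l ω‖ ∂P) = a := by
          intro j hj
          have hj' := mem_Ico.mp hj
          rw [(hpair j l (by omega)).1, if_pos (by omega), if_pos (by omega)]
        rw [Finset.sum_congr rfl hc, Finset.sum_const, Nat.card_Ico, nsmul_eq_mul]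
        congr 1
        push_cast [hl'.1]
        ring
      rw [Finset.sum_congr rfl step, ← Finset.sum_mul, gaussIco k m hkm]
    have p2 : ∑ l ∈ Ico m n, (∫ ω, ∑ j ∈ Ico k l, ‖X j ω - X l ω‖ ∂P)
        = (N - M) * (M - K) * b + (N - M) * (N - M - 1) / 2 * c := by
      have step : ∀ l ∈ Ico m n, (∫ ω, ∑ j ∈ Ico k l, ‖X j ω - X l ω‖ ∂P)
          = (M - K) * b + ((l : ℝ) - M) * c := by
        intro l hl
        have hl' := mem_Ico.mp hl
        have hml : m ≤ l := hl'.1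
        rw [integral_finset_sum _ (fun j hj =>
          hint j l (by simp only [mem_Ico] at hj; omega))]
        rw [← Finset.sum_Ico_consecutive _ hkm hml]
        have e1 : ∑ j ∈ Ico k m, (∫ ω, ‖X j ω - X l ω‖ ∂P) = (M - K) * b := by
          have hc : ∀ j ∈ Ico k m, (∫ ω, ‖X j ω - X l ω‖ ∂P) = b := by
            intro j hj
            have hj' := mem_Ico.mp hj
            rw [(hpair j l (by omega)).1, if_pos (by omega), if_neg (by omega)]
          rw [Finset.sum_congr rfl hc, Finset.sum_const, Nat.card_Ico, nsmul_eq_mul, cmk]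
        have e2 : ∑ j ∈ Ico m l, (∫ ω, ‖X j ω - X l ω‖ ∂P) = ((l : ℝ) - M) * c := by
          have hc : ∀ j ∈ Ico m l, (∫ ω, ‖X j ω - X l ω‖ ∂P) = c := by
            intro j hj
            have hj' := mem_Ico.mp hj
            rw [(hpair j l (by omega)).1, if_neg (by omega), if_neg (by omega)]
          rw [Finset.sum_congr rfl hc, Finset.sum_const, Nat.card_Ico, nsmul_eq_mul]
          congr 1
          push_cast [hml]
          ring
        rw [e1, e2]
      rw [Finset.sum_congr rfl step, Finset.sum_add_distrib, Finset.sum_const, Nat.card_Ico,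
        nsmul_eq_mul, ← Finset.sum_mul, gaussIco m n hmn, cnm]
      simp only [hM, hN]
      ring
    rw [p1, p2]
    ring
  -- integrability of the U's
  have iXY : Integrable (fun ω => UXY X n k ω) P := by
    unfold UXY
    exact (integrable_finset_sum _ (fun i hi => integrable_finset_sum _ fun j hj =>
      hint i j (by simp only [mem_range] at hi; simp only [mem_Ico] at hj; omega))).const_mul _
  have iXX : Integrable (fun ω => UXX X k ω) P := by
    unfold UXX
    exact (integrable_finset_sum _ (fun l hl => integrable_finset_sum _ fun i hi =>
      hint i l (by simp only [mem_range] at hl hi; omega))).const_mul _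
  have iYY : Integrable (fun ω => UYY X n k ω) P := by
    unfold UYY
    exact (integrable_finset_sum _ (fun l hl => integrable_finset_sum _ fun j hj =>
      hint j l (by simp only [mem_Ico] at hl hj; omega))).const_mul _
  have hS : ∫ ω, S X n k ω ∂P = (K * (N - K) / N) *
      (2 * (∫ ω, UXY X n k ω ∂P) - (∫ ω, UXX X k ω ∂P) - ∫ ω, UYY X n k ω ∂P) := by
    unfold S Ek
    have i1 : Integrable (fun ω => 2 * UXY X n k ω) P := iXY.const_mul 2
    have i2 : Integrable (fun ω => 2 * UXY X n k ω - UXX X k ω) P := i1.sub iXX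
    rw [integral_const_mul, integral_sub i2 iYY, integral_sub i1 iXX, integral_const_mul]
  rw [hS, hXY, hXX, hYY]
  have hk2' : (2 : ℝ) ≤ K := by rw [hK]; exact_mod_cast hk2
  have hkn' : K + 2 ≤ N := by rw [hK, hN]; exact_mod_cast hkn
  exact Aexpr_eq a b c K M N (by linarith) (by linarith) (by linarith) (by linarith)
    (by linarith)

end core


section core2
variable {Ω : Type*} [MeasurableSpace Ω] {P : Measure Ω} [IsProbabilityMeasure P] {p : ℕ}
  {F₁ F₂ : Measure (EuclideanSpace ℝ (Fin p))}
  [IsProbabilityMeasure F₁] [IsProbabilityMeasure F₂]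
  {X : ℕ → Ω → EuclideanSpace ℝ (Fin p)} {m : ℕ}

lemma integral_S_div_B
    (h1 : Integrable (fun x => ‖x‖) F₁) (h2 : Integrable (fun x => ‖x‖) F₂)
    (hXm : ∀ i, Measurable (X i)) (hind : iIndepFun X P)
    (hlaw1 : ∀ i, i < m → P.map (X i) = F₁) (hlaw2 : ∀ i, m ≤ i → P.map (X i) = F₂)
    (n k : ℕ) (hk2 : 2 ≤ k) (hmk : m ≤ k) (hkn : k + 2 ≤ n) :
    (∫ ω, S X n k ω ∂P) / n
      = Bform (I2 F₁ F₁) (I2 F₁ F₂) (I2 F₂ F₂) ((k : ℝ) / n) ((m : ℝ) / n) (1 / (n : ℝ)) := by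
  set a := I2 F₁ F₁ with ha
  set b := I2 F₁ F₂ with hb
  set c := I2 F₂ F₂ with hc
  set K := (k : ℝ) with hK
  set M := (m : ℝ) with hM
  set N := (n : ℝ) with hN
  have hkn' : k ≤ n := by omega
  have hlawi : ∀ i, P.map (X i) = if i < m then F₁ else F₂ := by
    intro i
    by_cases h : i < m
    · simp [h, hlaw1 i h]
    · simp [h, hlaw2 i (le_of_not_gt h)]
  have hIntlaw : ∀ i, Integrable (fun x => ‖x‖) (P.map (X i)) := by
    intro i; rw [hlawi i]; split_ifs; exacts [h1, h2]
  have hpair : ∀ i j : ℕ, i ≠ j →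
      ((∫ ω, ‖X i ω - X j ω‖ ∂P)
          = I2 (if i < m then F₁ else F₂) (if j < m then F₁ else F₂)) ∧
        Integrable (fun ω => ‖X i ω - X j ω‖) P := by
    intro i j hij
    have := pair_integral (hXm i) (hXm j) (hind.indepFun hij) (hIntlaw i) (hIntlaw j)
    rwa [hlawi i, hlawi j] at this
  have hint : ∀ i j : ℕ, i ≠ j → Integrable (fun ω => ‖X i ω - X j ω‖) P :=
    fun i j h => (hpair i j h).2
  have cmk : ((k - m : ℕ) : ℝ) = K - M := by push_cast [hmk]; ring
  have cnk : ((n - k : ℕ) : ℝ) = N - K := by push_cast [hkn']; ring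
  -- UXY
  have hXY : ∫ ω, UXY X n k ω ∂P
      = (1 / (K * (N - K))) * ((N - K) * (M * b + (K - M) * c)) := by
    unfold UXY
    rw [integral_const_mul]
    congr 1
    rw [integral_finset_sum _ (fun i hi => integrable_finset_sum _ fun j hj =>
      hint i j (by simp only [mem_range] at hi; simp only [mem_Ico] at hj; omega))]
    have step : ∀ i ∈ range k, (∫ ω, ∑ j ∈ Ico k n, ‖X i ω - X j ω‖ ∂P)
        = (N - K) * (if i < m then b else c) := by
      intro i hi
      have hik : i < k := mem_range.mp hi
      rw [integral_finset_sum _ (fun j hj =>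
        hint i j (by simp only [mem_Ico] at hj; omega))]
      have hcst : ∀ j ∈ Ico k n, (∫ ω, ‖X i ω - X j ω‖ ∂P) = (if i < m then b else c) := by
        intro j hj
        have hj' := mem_Ico.mp hj
        rw [(hpair i j (show i ≠ j by omega)).1,
          if_neg (show ¬ j < m by omega)]
        by_cases him : i < m
        · rw [if_pos him, if_pos him]
        · rw [if_neg him, if_neg him]
      rw [Finset.sum_congr rfl hcst, Finset.sum_const, Nat.card_Ico, nsmul_eq_mul, cnk]
    rw [Finset.sum_congr rfl step, ← Finset.mul_sum]
    congr 1
    rw [Finset.range_eq_Ico, ← Finset.sum_Ico_consecutive _ (Nat.zero_le m) hmk]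
    have e1 : ∑ i ∈ Ico 0 m, (if i < m then b else c) = M * b := by
      have hcst : ∀ i ∈ Ico 0 m, (if i < m then b else c) = b := by
        intro i hi; rw [if_pos (mem_Ico.mp hi).2]
      rw [Finset.sum_congr rfl hcst, Finset.sum_const, Nat.card_Ico, nsmul_eq_mul]
      simp [hM]
    have e2 : ∑ i ∈ Ico m k, (if i < m then b else c) = (K - M) * c := by
      have hcst : ∀ i ∈ Ico m k, (if i < m then b else c) = c := by
        intro i hi; rw [if_neg (not_lt.mpr (mem_Ico.mp hi).1)]
      rw [Finset.sum_congr rfl hcst, Finset.sum_const, Nat.card_Ico, nsmul_eq_mul, cmk]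
    rw [e1, e2]
  -- UXX
  have hXX : ∫ ω, UXX X k ω ∂P = (2 / (K * (K - 1))) *
      (M * (M - 1) / 2 * a + (K - M) * M * b + (K - M) * (K - M - 1) / 2 * c) := by
    unfold UXX
    rw [integral_const_mul]
    congr 1
    rw [integral_finset_sum _ (fun l hl => integrable_finset_sum _ fun i hi =>
      hint i l (by simp only [mem_range] at hl hi; omega))]
    rw [Finset.range_eq_Ico, ← Finset.sum_Ico_consecutive _ (Nat.zero_le m) hmk]
    have p1 : ∑ l ∈ Ico 0 m, (∫ ω, ∑ i ∈ Ico 0 l, ‖X i ω - X l ω‖ ∂P)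
        = M * (M - 1) / 2 * a := by
      have step : ∀ l ∈ Ico 0 m, (∫ ω, ∑ i ∈ Ico 0 l, ‖X i ω - X l ω‖ ∂P)
          = (l : ℝ) * a := by
        intro l hl
        have hl' : l < m := (mem_Ico.mp hl).2
        rw [integral_finset_sum _ (fun i hi =>
          hint i l (by simp only [mem_Ico] at hi; omega))]
        have hcst : ∀ i ∈ Ico 0 l, (∫ ω, ‖X i ω - X l ω‖ ∂P) = a := by
          intro i hi
          have hil : i < l := (mem_Ico.mp hi).2
          rw [(hpair i l (by omega)).1, if_pos (by omega), if_pos (by omega)]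
        rw [Finset.sum_congr rfl hcst, Finset.sum_const, Nat.card_Ico, nsmul_eq_mul]
        simp
      rw [Finset.sum_congr rfl step, ← Finset.sum_mul, ← Finset.range_eq_Ico, gaussR]
    have p2 : ∑ l ∈ Ico m k, (∫ ω, ∑ i ∈ Ico 0 l, ‖X i ω - X l ω‖ ∂P)
        = (K - M) * M * b + (K - M) * (K - M - 1) / 2 * c := by
      have step : ∀ l ∈ Ico m k, (∫ ω, ∑ i ∈ Ico 0 l, ‖X i ω - X l ω‖ ∂P)
          = M * b + ((l : ℝ) - M) * c := by
        intro l hl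
        have hl' := mem_Ico.mp hl
        have hml : m ≤ l := hl'.1
        rw [integral_finset_sum _ (fun i hi =>
          hint i l (by simp only [mem_Ico] at hi; omega))]
        rw [← Finset.sum_Ico_consecutive _ (Nat.zero_le m) hml]
        have e1 : ∑ i ∈ Ico 0 m, (∫ ω, ‖X i ω - X l ω‖ ∂P) = M * b := by
          have hcst : ∀ i ∈ Ico 0 m, (∫ ω, ‖X i ω - X l ω‖ ∂P) = b := by
            intro i hi
            have hi' := mem_Ico.mp hi
            rw [(hpair i l (by omega)).1, if_pos (by omega), if_neg (by omega)]
          rw [Finset.sum_congr rfl hcst, Finset.sum_const, Nat.card_Ico, nsmul_eq_mul]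
          simp [hM]
        have e2 : ∑ i ∈ Ico m l, (∫ ω, ‖X i ω - X l ω‖ ∂P) = ((l : ℝ) - M) * c := by
          have hcst : ∀ i ∈ Ico m l, (∫ ω, ‖X i ω - X l ω‖ ∂P) = c := by
            intro i hi
            have hi' := mem_Ico.mp hi
            rw [(hpair i l (by omega)).1, if_neg (by omega), if_neg (by omega)]
          rw [Finset.sum_congr rfl hcst, Finset.sum_const, Nat.card_Ico, nsmul_eq_mul]
          congr 1
          push_cast [hml]
          ring
        rw [e1, e2]
      rw [Finset.sum_congr rfl step, Finset.sum_add_distrib, Finset.sum_const, Nat.card_Ico,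
        nsmul_eq_mul, ← Finset.sum_mul, gaussIco m k hmk, cmk]
      simp only [hM, hK]
      ring
    simp only [← Finset.range_eq_Ico] at p1 p2 ⊢
    rw [p1, p2]
    ring
  -- UYY
  have hYY : ∫ ω, UYY X n k ω ∂P = (2 / ((N - K) * (N - K - 1))) *
      ((N - K) * (N - K - 1) / 2 * c) := by
    unfold UYY
    rw [integral_const_mul]
    congr 1
    rw [integral_finset_sum _ (fun l hl => integrable_finset_sum _ fun j hj =>
      hint j l (by simp only [mem_Ico] at hl hj; omega))]
    have step : ∀ l ∈ Ico k n, (∫ ω, ∑ j ∈ Ico k l, ‖X j ω - X l ω‖ ∂P)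
        = ((l : ℝ) - K) * c := by
      intro l hl
      have hl' := mem_Ico.mp hl
      rw [integral_finset_sum _ (fun j hj =>
        hint j l (by simp only [mem_Ico] at hj; omega))]
      have hcst : ∀ j ∈ Ico k l, (∫ ω, ‖X j ω - X l ω‖ ∂P) = c := by
        intro j hj
        have hj' := mem_Ico.mp hj
        rw [(hpair j l (by omega)).1, if_neg (by omega), if_neg (by omega)]
      rw [Finset.sum_congr rfl hcst, Finset.sum_const, Nat.card_Ico, nsmul_eq_mul]
      congr 1
      push_cast [hl'.1]
      ring
    rw [Finset.sum_congr rfl step, ← Finset.sum_mul, gaussIco k n (by omega)]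
  -- integrability of the U's
  have iXY : Integrable (fun ω => UXY X n k ω) P := by
    unfold UXY
    exact (integrable_finset_sum _ (fun i hi => integrable_finset_sum _ fun j hj =>
      hint i j (by simp only [mem_range] at hi; simp only [mem_Ico] at hj; omega))).const_mul _
  have iXX : Integrable (fun ω => UXX X k ω) P := by
    unfold UXX
    exact (integrable_finset_sum _ (fun l hl => integrable_finset_sum _ fun i hi =>
      hint i l (by simp only [mem_range] at hl hi; omega))).const_mul _
  have iYY : Integrable (fun ω => UYY X n k ω) P := by
    unfold UYY
    exact (integrable_finset_sum _ (fun l hl => integrable_finset_sum _ fun j hj =>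
      hint j l (by simp only [mem_Ico] at hl hj; omega))).const_mul _
  have hS : ∫ ω, S X n k ω ∂P = (K * (N - K) / N) *
      (2 * (∫ ω, UXY X n k ω ∂P) - (∫ ω, UXX X k ω ∂P) - ∫ ω, UYY X n k ω ∂P) := by
    unfold S Ek
    have i1 : Integrable (fun ω => 2 * UXY X n k ω) P := iXY.const_mul 2
    have i2 : Integrable (fun ω => 2 * UXY X n k ω - UXX X k ω) P := i1.sub iXX
    rw [integral_const_mul, integral_sub i2 iYY, integral_sub i1 iXX, integral_const_mul]
  rw [hS, hXY, hXX, hYY]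
  have hk2' : (2 : ℝ) ≤ K := by rw [hK]; exact_mod_cast hk2
  have hkn'' : K + 2 ≤ N := by rw [hK, hN]; exact_mod_cast hkn
  exact Bexpr_eq a b c K M N (by linarith) (by linarith) (by linarith) (by linarith)
    (by linarith)

end core2


end helpers

/-- Under the single change-point model with `k*_n/n → τ`, for every `γ ∈ (0,1)`,
`E[S_{n,⌊nγ⌋}]/n → Δ·G(γ,τ)`. -/
theorem mean_S_tendsto {Ω : Type*} [MeasurableSpace Ω] (P : Measure Ω)
    [IsProbabilityMeasure P] {p : ℕ}
    (F₁ F₂ : Measure (EuclideanSpace ℝ (Fin p)))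
    [IsProbabilityMeasure F₁] [IsProbabilityMeasure F₂] (hne : F₁ ≠ F₂)
    (hm1 : Integrable (fun x => ‖x‖ ^ 2) F₁)
    (hm2 : Integrable (fun x => ‖x‖ ^ 2) F₂)
    (X : ℕ → ℕ → Ω → EuclideanSpace ℝ (Fin p)) (kstar : ℕ → ℕ)
    (hmeas : ∀ n i, Measurable (X n i))
    (hindep : ∀ n, iIndepFun (X n) P)
    (hlaw1 : ∀ n i, i < kstar n → Measure.map (X n i) P = F₁)
    (hlaw2 : ∀ n i, kstar n ≤ i → Measure.map (X n i) P = F₂)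
    (τ : ℝ) (hτ : τ ∈ Set.Ioo (0 : ℝ) 1)
    (hk : Tendsto (fun n => (kstar n : ℝ) / (n : ℝ)) atTop (𝓝 τ))
    (γ : ℝ) (hγ : γ ∈ Set.Ioo (0 : ℝ) 1) :
    Tendsto (fun n => (∫ ω, S (X n) n (⌊(n : ℝ) * γ⌋₊) ω ∂P) / (n : ℝ)) atTop
      (𝓝 (Delta F₁ F₂ * G γ τ)) := by
  obtain ⟨hγ0, hγ1⟩ := hγ
  obtain ⟨hτ0, hτ1⟩ := hτ
  have h1 : Integrable (fun x => ‖x‖) F₁ := integrable_norm_of_sq hm1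
  have h2 : Integrable (fun x => ‖x‖) F₂ := integrable_norm_of_sq hm2
  set a := I2 F₁ F₁ with ha
  set b := I2 F₁ F₂ with hb
  set c := I2 F₂ F₂ with hc
  have hΔ : Delta F₁ F₂ = 2 * b - a - c := rfl
  set kk : ℕ → ℕ := fun n => ⌊(n : ℝ) * γ⌋₊ with hkk
  set x : ℕ → ℝ := fun n => (kk n : ℝ) / n with hxdef
  set t : ℕ → ℝ := fun n => (kstar n : ℝ) / n with htdef
  set e : ℕ → ℝ := fun n => 1 / (n : ℝ) with hedef
  have hx : Tendsto x atTop (𝓝 γ) := by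
    have := (tendsto_nat_floor_mul_div_atTop (le_of_lt hγ0)).comp
      tendsto_natCast_atTop_atTop (α := ℕ)
    simpa [hxdef, hkk, Function.comp_def, mul_comm] using this
  have ht : Tendsto t atTop (𝓝 τ) := hk
  have he : Tendsto e atTop (𝓝 0) := tendsto_one_div_atTop_nhds_zero_nat
  -- eventual bounds
  have hE1 : ∀ᶠ n in atTop, 2 ≤ kk n := by
    have h := tendsto_nat_floor_mul_atTop γ hγ0
    have h' : Tendsto kk atTop atTop := by
      simpa [hkk, mul_comm] using h
    exact h'.eventually_ge_atTop 2
  have hE2 : ∀ᶠ n in atTop, kk n + 2 ≤ n := by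
    have hmono : ∀ n : ℕ, ((n : ℝ) * (1 - γ)) ≤ (n : ℝ) - kk n := by
      intro n
      have hfl : (kk n : ℝ) ≤ (n : ℝ) * γ :=
        Nat.floor_le (by positivity)
      nlinarith
    have hlim : Tendsto (fun n : ℕ => (n : ℝ) * (1 - γ)) atTop atTop :=
      Tendsto.atTop_mul_const (by linarith) tendsto_natCast_atTop_atTop
    have h' : Tendsto (fun n : ℕ => (n : ℝ) - kk n) atTop atTop :=
      tendsto_atTop_mono hmono hlim
    filter_upwards [h'.eventually_ge_atTop 2] with n hn
    have : (kk n : ℝ) + 2 ≤ n := by linarith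
    exact_mod_cast this
  have hE3 : ∀ᶠ n in atTop, kstar n ≤ n := by
    have hlt := ht.eventually_lt_const hτ1
    filter_upwards [hlt, eventually_gt_atTop 0] with n hn hn0
    have hn0' : (0 : ℝ) < n := by exact_mod_cast hn0
    have : (kstar n : ℝ) < n := by
      rw [htdef] at hn
      simpa [div_lt_one hn0'] using hn
    exact_mod_cast this.le
  -- eventual formula
  have hev : ∀ᶠ n in atTop, (∫ ω, S (X n) n (kk n) ω ∂P) / (n : ℝ)
      = if kk n ≤ kstar n then Aform a b c (x n) (t n) (e n)
        else Bform a b c (x n) (t n) (e n) := by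
    filter_upwards [hE1, hE2, hE3] with n e1 e2 e3
    by_cases h : kk n ≤ kstar n
    · rw [if_pos h]
      exact integral_S_div_A h1 h2 (hmeas n) (hindep n) (hlaw1 n) (hlaw2 n) n (kk n)
        e1 h e3 e2
    · rw [if_neg h]
      exact integral_S_div_B h1 h2 (hmeas n) (hindep n) (hlaw1 n) (hlaw2 n) n (kk n)
        e1 (le_of_not_ge h) e2
  have h1γ : (1 : ℝ) - γ ≠ 0 := by linarith
  have hγne : γ ≠ 0 := by linarith
  have hA := Aform_tendsto a b c h1γ hx ht he
  have hB := Bform_tendsto a b c hγne hx ht he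
  rcases lt_trichotomy γ τ with hlt | heq | hgt
  · -- γ < τ : eventually kk n ≤ kstar n
    have hGL : Delta F₁ F₂ * G γ τ = Aform a b c γ τ 0 := by
      rw [hΔ, G, if_pos hlt.le, Aform_limit a b c γ τ h1γ]
    have hevA : ∀ᶠ n in atTop, kk n ≤ kstar n := by
      have hd : Tendsto (fun n => t n - x n) atTop (𝓝 (τ - γ)) := ht.sub hx
      filter_upwards [hd.eventually_const_lt (by linarith : (0:ℝ) < τ - γ),
        eventually_gt_atTop 0] with n hn hn0
      have hn0' : (0 : ℝ) < n := by exact_mod_cast hn0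
      have hxt : x n < t n := by linarith
      have hxt' : (kk n : ℝ) / n < (kstar n : ℝ) / n := hxt
      have := (div_lt_div_iff_of_pos_right hn0').mp hxt'
      exact_mod_cast this.le
    rw [hGL]
    refine hA.congr' ?_
    filter_upwards [hev, hevA] with n h h'
    rw [h, if_pos h']
  · -- γ = τ
    subst heq
    have hGA : Delta F₁ F₂ * G γ γ = Aform a b c γ γ 0 := by
      rw [hΔ, G, if_pos le_rfl, Aform_limit a b c γ γ h1γ]
    have hGB : Delta F₁ F₂ * G γ γ = Bform a b c γ γ 0 := by
      rw [hΔ, G, if_pos le_rfl, Bform_limit a b c γ γ hγne]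
      congr 1
      field_simp
    have hA' : Tendsto (fun n => Aform a b c (x n) (t n) (e n)) atTop
        (𝓝 (Delta F₁ F₂ * G γ γ)) := by
      rw [hGA]; exact hA
    have hB' : Tendsto (fun n => Bform a b c (x n) (t n) (e n)) atTop
        (𝓝 (Delta F₁ F₂ * G γ γ)) := by
      rw [hGB]; exact hB
    rw [tendsto_iff_dist_tendsto_zero]
    have hsq : Tendsto (fun n => dist (Aform a b c (x n) (t n) (e n)) (Delta F₁ F₂ * G γ γ)
        + dist (Bform a b c (x n) (t n) (e n)) (Delta F₁ F₂ * G γ γ)) atTop (𝓝 0) := by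
      have := (tendsto_iff_dist_tendsto_zero.mp hA').add
        (tendsto_iff_dist_tendsto_zero.mp hB')
      simpa using this
    refine squeeze_zero' ?_ ?_ hsq
    · exact Eventually.of_forall fun n => dist_nonneg
    · filter_upwards [hev] with n h
      rw [h]
      split_ifs
      · exact le_add_of_nonneg_right dist_nonneg
      · exact le_add_of_nonneg_left dist_nonneg
  · -- τ < γ : eventually kstar n ≤ kk n
    have hGL : Delta F₁ F₂ * G γ τ = Bform a b c γ τ 0 := by
      rw [hΔ, G, if_neg (not_le.mpr hgt), Bform_limit a b c γ τ hγne]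
    have hevB : ∀ᶠ n in atTop, ¬ kk n ≤ kstar n := by
      have hd : Tendsto (fun n => x n - t n) atTop (𝓝 (γ - τ)) := hx.sub ht
      filter_upwards [hd.eventually_const_lt (by linarith : (0:ℝ) < γ - τ),
        eventually_gt_atTop 0] with n hn hn0
      have hn0' : (0 : ℝ) < n := by exact_mod_cast hn0
      have hxt : t n < x n := by linarith
      have hxt' : (kstar n : ℝ) / n < (kk n : ℝ) / n := hxt
      have h2' := (div_lt_div_iff_of_pos_right hn0').mp hxt'
      have : kstar n < kk n := by exact_mod_cast h2'
      omega
    rw [hGL]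
    refine hB.congr' ?_
    filter_upwards [hev, hevB] with n h h'
    rw [h, if_neg h']
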